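/- The scattering function f(r) = m(r)/r is differentiable on (0,∞) and its derivative satisfies, for every r > 0, 0 ≤ f'(r) ≤ 𝔞₀^μ/r² and f'(r) ≤ (1 − c₁^μ)/r, where c₁^μ := lim_{r→0⁺} f(r) = inf_{r>0} f(r). -/

import Mathlib

/-!
Since `μ m'' = v m ≥ 0`, the function `m` is convex on `[0, ∞)` with `m 0 = 0`. Hence
`f r = m r / r`, the slope of the chord from the origin, is nondecreasing (so its limit at `0⁺` is
its infimum `c₁`), and that slope is at most `m' r`. Now `f' = g / r²` with `g r = r m' r - m r`,
so `f' ≥ 0`. Since `g' = r m'' ≥ 0` and `g = 𝔞₀` beyond `R₀`, we get `g ≤ 𝔞₀`; since `m'` is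
nondecreasing and equals `1` beyond `R₀`, we get `g ≤ r - m r ≤ r (1 - c₁)`.
-/

open Set MeasureTheory

/-- A zero-energy scattering solution `m` for the radial potential `v` supported in `[0, R₀]`
with semiclassical parameter `μ`: it satisfies `μ m'' = v m` on `(0,∞)`, is continuous on
`[0,∞)` and continuously differentiable on `(0,∞)`, with `m(0) = 0`, `m > 0` on `(0,∞)`, and
`m(r) = r - 𝔞₀^μ` for `r ≥ R₀`, where `𝔞₀^μ := R₀ - m(R₀)` is the scattering length. -/
structure ZeroEnergyScattering (v : ℝ → ℝ) (R₀ μ : ℝ) (m : ℝ → ℝ) : Prop where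
  cont : ContinuousOn m (Set.Ici 0)
  diff : ∀ r ∈ Set.Ioi (0 : ℝ), DifferentiableAt ℝ m r
  derivCont : ContinuousOn (deriv m) (Set.Ioi 0)
  diff2 : ∀ r ∈ Set.Ioi (0 : ℝ), DifferentiableAt ℝ (deriv m) r
  ode : ∀ r ∈ Set.Ioi (0 : ℝ), μ * deriv (deriv m) r = v r * m r
  zero : m 0 = 0
  pos : ∀ r ∈ Set.Ioi (0 : ℝ), 0 < m r
  radiation : ∀ r, R₀ ≤ r → m r = r - (R₀ - m R₀)

open Filter Topology

lemma monotoneOn_Ioi_of_hasDerivAt_nonneg {f f' : ℝ → ℝ} {a : ℝ}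
    (hf : ∀ x ∈ Ioi a, HasDerivAt f (f' x) x) (hf' : ∀ x ∈ Ioi a, 0 ≤ f' x) :
    MonotoneOn f (Ioi a) :=
  monotoneOn_of_hasDerivWithinAt_nonneg (convex_Ioi a)
    (fun x hx => (hf x hx).continuousAt.continuousWithinAt)
    (by simpa only [interior_Ioi] using fun x hx => (hf x hx).hasDerivWithinAt)
    (by simpa only [interior_Ioi] using hf')

lemma MonotoneOn.le_of_eq_on_Ioi {f : ℝ → ℝ} {a R c : ℝ} (hf : MonotoneOn f (Ioi a))
    (hc : ∀ t, R < t → f t = c) {x : ℝ} (hx : a < x) : f x ≤ c := by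
  have hR : R < max x R + 1 := by linarith [le_max_right x R]
  have hxt : x ≤ max x R + 1 := by linarith [le_max_left x R]
  calc f x ≤ f (max x R + 1) := hf hx (hx.trans_le hxt) hxt
    _ = c := hc _ hR

lemma HasDerivAt.div_id {m : ℝ → ℝ} {m' r : ℝ} (hm : HasDerivAt m m' r) (hr : r ≠ 0) :
    HasDerivAt (fun s => m s / s) ((r * m' - m r) / r ^ 2) r :=
  (hm.div (hasDerivAt_id' r) hr).congr_deriv (by ring)

lemma hasDerivAt_mul_deriv_sub {m : ℝ → ℝ} {r : ℝ} (hm : DifferentiableAt ℝ m r)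
    (hm' : DifferentiableAt ℝ (deriv m) r) :
    HasDerivAt (fun s => s * deriv m s - m s) (r * deriv (deriv m) r) r :=
  (((hasDerivAt_id' r).mul hm'.hasDerivAt).sub hm.hasDerivAt).congr_deriv (by ring)

namespace ZeroEnergyScattering

variable {v : ℝ → ℝ} {R₀ μ : ℝ} {m : ℝ → ℝ}

lemma deriv_deriv_nonneg (hm : ZeroEnergyScattering v R₀ μ m) (hμ : 0 < μ)
    (hv : ∀ r, 0 ≤ v r) {r : ℝ} (hr : 0 < r) : 0 ≤ deriv (deriv m) r := by
  have h := hm.ode r hr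
  have hvm : 0 ≤ v r * m r := mul_nonneg (hv r) (hm.pos r hr).le
  nlinarith

lemma monotoneOn_deriv (hm : ZeroEnergyScattering v R₀ μ m) (hμ : 0 < μ)
    (hv : ∀ r, 0 ≤ v r) : MonotoneOn (deriv m) (Ioi 0) :=
  monotoneOn_Ioi_of_hasDerivAt_nonneg (fun r hr => (hm.diff2 r hr).hasDerivAt)
    fun _ hr => hm.deriv_deriv_nonneg hμ hv hr

lemma convexOn (hm : ZeroEnergyScattering v R₀ μ m) (hμ : 0 < μ) (hv : ∀ r, 0 ≤ v r) :
    ConvexOn ℝ (Ici 0) m :=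
  MonotoneOn.convexOn_of_deriv (convex_Ici 0) hm.cont
    (by rw [interior_Ici]; exact fun r hr => (hm.diff r hr).differentiableWithinAt)
    (by rw [interior_Ici]; exact hm.monotoneOn_deriv hμ hv)

lemma deriv_eq_one (hm : ZeroEnergyScattering v R₀ μ m) {r : ℝ} (hr : R₀ < r) :
    deriv m r = 1 := by
  have hlin : m =ᶠ[𝓝 r] fun s => s - (R₀ - m R₀) := by
    filter_upwards [Ioi_mem_nhds hr] with s hs
    exact hm.radiation s hs.le
  rw [hlin.deriv_eq]
  simp

lemma deriv_le_one (hm : ZeroEnergyScattering v R₀ μ m) (hμ : 0 < μ) (hv : ∀ r, 0 ≤ v r)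
    {r : ℝ} (hr : 0 < r) : deriv m r ≤ 1 :=
  (hm.monotoneOn_deriv hμ hv).le_of_eq_on_Ioi (fun _ ht => hm.deriv_eq_one ht) hr

lemma monotoneOn_div_self (hm : ZeroEnergyScattering v R₀ μ m) (hμ : 0 < μ)
    (hv : ∀ r, 0 ≤ v r) : MonotoneOn (fun s => m s / s) (Ioi 0) := by
  intro x hx y hy hxy
  simpa only [hm.zero, sub_zero] using
    (hm.convexOn hμ hv).secant_mono self_mem_Ici (mem_Ici_of_Ioi hx) (mem_Ici_of_Ioi hy)
      (ne_of_gt hx) (ne_of_gt hy) hxy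

lemma div_self_le_deriv (hm : ZeroEnergyScattering v R₀ μ m) (hμ : 0 < μ)
    (hv : ∀ r, 0 ≤ v r) {r : ℝ} (hr : 0 < r) : m r / r ≤ deriv m r := by
  simpa only [slope_def_field, hm.zero, sub_zero] using
    (hm.convexOn hμ hv).slope_le_deriv self_mem_Ici (mem_Ici_of_Ioi hr) hr (hm.diff r hr)

lemma mul_deriv_sub_le (hm : ZeroEnergyScattering v R₀ μ m) (hμ : 0 < μ)
    (hv : ∀ r, 0 ≤ v r) {r : ℝ} (hr : 0 < r) : r * deriv m r - m r ≤ R₀ - m R₀ := by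
  have hmono : MonotoneOn (fun s => s * deriv m s - m s) (Ioi 0) :=
    monotoneOn_Ioi_of_hasDerivAt_nonneg
      (fun s hs => hasDerivAt_mul_deriv_sub (hm.diff s hs) (hm.diff2 s hs))
      fun s hs => mul_nonneg (le_of_lt hs) (hm.deriv_deriv_nonneg hμ hv hs)
  refine hmono.le_of_eq_on_Ioi (fun t (ht : R₀ < t) => ?_) hr
  rw [hm.deriv_eq_one ht, hm.radiation t ht.le]
  ring

end ZeroEnergyScattering

theorem scattering_function_gradient_bounds_general
    (R₀ μ : ℝ) (hμ : 0 < μ)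
    (v : ℝ → ℝ) (hv_nonneg : ∀ r, 0 ≤ v r)
    (m : ℝ → ℝ) (hm : ZeroEnergyScattering v R₀ μ m) :
    (∀ r, 0 < r → DifferentiableAt ℝ (fun s => m s / s) r) ∧
    Filter.Tendsto (fun r => m r / r) (nhdsWithin 0 (Set.Ioi 0))
      (nhds (⨅ r : Set.Ioi (0 : ℝ), m (r : ℝ) / (r : ℝ))) ∧
    (∀ r, 0 < r →
      0 ≤ deriv (fun s => m s / s) r ∧
      deriv (fun s => m s / s) r ≤ (R₀ - m R₀) / r ^ 2 ∧
      deriv (fun s => m s / s) r ≤ (1 - ⨅ r' : Set.Ioi (0 : ℝ), m (r' : ℝ) / (r' : ℝ)) / r) := by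
  have hf' : ∀ r, 0 < r →
      HasDerivAt (fun s => m s / s) ((r * deriv m r - m r) / r ^ 2) r := fun r hr =>
    (hm.diff r hr).hasDerivAt.div_id hr.ne'
  have hbdd : BddBelow (range fun r : Ioi (0 : ℝ) => m r / r) :=
    ⟨0, by rintro _ ⟨⟨r, hr⟩, rfl⟩; exact div_nonneg (hm.pos r hr).le (le_of_lt hr)⟩
  refine ⟨fun r hr => (hf' r hr).differentiableAt, ?_, fun r hr => ?_⟩
  · have hlim := (hm.monotoneOn_div_self hμ hv_nonneg).tendsto_nhdsGT (by rwa [image_eq_range])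
    rwa [image_eq_range, sInf_range] at hlim
  set c₁ := ⨅ r' : Ioi (0 : ℝ), m r' / r'
  have hc₁ : r * c₁ ≤ m r := by
    rw [← le_div_iff₀' hr]
    exact ciInf_le hbdd ⟨r, hr⟩
  have hg_nonneg : 0 ≤ r * deriv m r - m r := by
    have hslope := hm.div_self_le_deriv hμ hv_nonneg hr
    rw [div_le_iff₀' hr] at hslope
    linarith
  have hg_le : r * deriv m r - m r ≤ r * (1 - c₁) := by
    nlinarith [hm.deriv_le_one hμ hv_nonneg hr]
  rw [(hf' r hr).deriv]
  refine ⟨by positivity,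
    div_le_div_of_nonneg_right (hm.mul_deriv_sub_le hμ hv_nonneg hr) (by positivity), ?_⟩
  calc (r * deriv m r - m r) / r ^ 2 ≤ r * (1 - c₁) / r ^ 2 := by gcongr
    _ = (1 - c₁) / r := by field_simp

/-- **Gradient bounds for the scattering function** `f(r) = m(r)/r`: `f` is differentiable on
`(0,∞)`, `f(r) → c₁^μ := inf_{r>0} f(r)` as `r → 0⁺`, and for every `r > 0` one has
`0 ≤ f'(r) ≤ 𝔞₀^μ/r²` and `f'(r) ≤ (1 - c₁^μ)/r`. -/
theorem scattering_function_gradient_bounds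
    (R₀ μ : ℝ) (hR₀ : 0 < R₀) (hμ : 0 < μ)
    (v : ℝ → ℝ) (hv_meas : Measurable v) (hv_nonneg : ∀ r, 0 ≤ v r)
    (hv_bdd : BddAbove (Set.range v))
    (hv_supp : ∀ r, R₀ ≤ r → v r = 0)
    (m : ℝ → ℝ) (hm : ZeroEnergyScattering v R₀ μ m) :
    (∀ r, 0 < r → DifferentiableAt ℝ (fun s => m s / s) r) ∧
    Filter.Tendsto (fun r => m r / r) (nhdsWithin 0 (Set.Ioi 0))
      (nhds (⨅ r : Set.Ioi (0 : ℝ), m (r : ℝ) / (r : ℝ))) ∧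
    (∀ r, 0 < r →
      0 ≤ deriv (fun s => m s / s) r ∧
      deriv (fun s => m s / s) r ≤ (R₀ - m R₀) / r ^ 2 ∧
      deriv (fun s => m s / s) r ≤ (1 - ⨅ r' : Set.Ioi (0 : ℝ), m (r' : ℝ) / (r' : ℝ)) / r) :=
  scattering_function_gradient_bounds_general R₀ μ hμ v hv_nonneg m hm
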